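/- Let λ be a measure on a measurable space X with 0 < λ(X) < ∞, let S ⊆ X × X be measurable, let g : X → ℝ be measurable and λ-integrable, set f x := ∫_{S_x} g dλ, and let Φ : ℝ → ℝ be continuous, nondecreasing on [0,∞), convex on [0,∞), with Φ(0) = 0. Let w₀ : X → ℝ be measurable with (λ(Sʸ)).toReal ≤ w₀(y) for every y ∈ X. Then ‖f‖_Φ ≤ (λ X) * ‖g‖_{Φ, v}, where v : X → ℝ is the weight v(y) := w₀(y) / (λ X).toReal and the inequality and product are taken in the extended nonnegative reals. -/

import Mathlib

open MeasureTheory ENNReal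

/-- Weighted Luxemburg functional: the infimum in `ℝ≥0∞` of `ENNReal.ofReal t` over all
real `t > 0` such that `∫⁻ x, ENNReal.ofReal (w x * Φ (|f x| / t)) ∂lam ≤ 1`
(the infimum of the empty family is `∞`). -/
noncomputable def luxW {X : Type*} [MeasurableSpace X] (lam : Measure X)
    (Φ : ℝ → ℝ) (w : X → ℝ) (f : X → ℝ) : ℝ≥0∞ :=
  sInf {r : ℝ≥0∞ | ∃ t : ℝ, 0 < t ∧
    (∫⁻ x, ENNReal.ofReal (w x * Φ (|f x| / t)) ∂lam) ≤ 1 ∧ r = ENNReal.ofReal t}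

/-! For a `t` admissible for `g`, Jensen's inequality for the normalised measure `λ / λ(X)` gives
`Φ(|f x| / (λ(X) t)) ≤ λ(X)⁻¹ ∫_{S_x} Φ(|g| / t)`. Integrating in `x` and exchanging the order of
integration turns the right-hand side into `λ(X)⁻¹ ∫ λ(Sʸ) Φ(|g y| / t) dy`, which the weight bound
`λ(Sʸ) ≤ w₀ y` keeps below `∫ (w₀ / λ(X)) Φ(|g| / t) ≤ 1`. So `λ(X) t` is admissible for `f`. -/

open Set

section

variable {X : Type*} [MeasurableSpace X]

theorem luxW_le_ofReal_mul_luxW {lam : Measure X} {Φ : ℝ → ℝ} {w w' f g : X → ℝ} {c : ℝ}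
    (hc : 0 < c)
    (h : ∀ t, 0 < t → ∫⁻ x, ENNReal.ofReal (w' x * Φ (|g x| / t)) ∂lam ≤ 1 →
      ∫⁻ x, ENNReal.ofReal (w x * Φ (|f x| / (c * t))) ∂lam ≤ 1) :
    luxW lam Φ w f ≤ ENNReal.ofReal c * luxW lam Φ w' g := by
  have hc₀ : ENNReal.ofReal c ≠ 0 := by simpa using hc
  conv_rhs => rw [luxW, sInf_eq_iInf, ENNReal.mul_iInf_of_ne hc₀ ofReal_ne_top]
  refine le_iInf fun r => ?_
  rw [ENNReal.mul_iInf_of_ne hc₀ ofReal_ne_top]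
  refine le_iInf fun ⟨t, ht, hI, hr⟩ => ?_
  rw [hr, ← ENNReal.ofReal_mul hc.le]
  exact sInf_le ⟨c * t, mul_pos hc ht, h t ht hI, rfl⟩

theorem lintegral_setLIntegral_section_eq {Y : Type*} [MeasurableSpace Y]
    {μ : Measure X} {ν : Measure Y} [SFinite μ] [SFinite ν] {S : Set (X × Y)}
    (hS : MeasurableSet S) {G : Y → ℝ≥0∞} (hG : AEMeasurable G ν) :
    ∫⁻ x, ∫⁻ y in {y | (x, y) ∈ S}, G y ∂ν ∂μ = ∫⁻ y, μ {x | (x, y) ∈ S} * G y ∂ν := by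
  have hsection (x : X) : ∫⁻ y in {y | (x, y) ∈ S}, G y ∂ν =
      ∫⁻ y, S.indicator (fun p => G p.2) (x, y) ∂ν := by
    rw [← lintegral_indicator (s := {y | (x, y) ∈ S}) (measurable_prodMk_left hS)]
    rfl
  have hcosection (y : Y) : ∫⁻ x, S.indicator (fun p => G p.2) (x, y) ∂μ =
      μ {x | (x, y) ∈ S} * G y := by
    rw [mul_comm, ← lintegral_indicator_const (s := {x | (x, y) ∈ S}) (measurable_prodMk_right hS)]
    rfl
  simp_rw [hsection]
  rw [lintegral_lintegral_swap (f := fun x y => S.indicator (fun p => G p.2) (x, y))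
    ((hG.comp_quasiMeasurePreserving Measure.quasiMeasurePreserving_snd).indicator hS)]
  simp_rw [hcosection]

theorem MonotoneOn.nonneg_of_map_zero {Φ : ℝ → ℝ} (hΦmono : MonotoneOn Φ (Ici 0))
    (hΦ0 : Φ 0 = 0) {r : ℝ} (hr : 0 ≤ r) : 0 ≤ Φ r :=
  hΦ0 ▸ hΦmono self_mem_Ici hr hr

theorem ofReal_map_abs_setIntegral_div_le {μ : Measure X} [IsFiniteMeasure μ] [NeZero μ]
    {Φ : ℝ → ℝ} (hΦc : Continuous Φ) (hΦmono : MonotoneOn Φ (Ici 0))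
    (hΦconv : ConvexOn ℝ (Ici 0) Φ) (hΦ0 : Φ 0 = 0) {s : Set X} (hs : MeasurableSet s)
    {g : X → ℝ} (hg : Integrable g μ) :
    ENNReal.ofReal (Φ (|∫ y in s, g y ∂μ| / μ.real univ)) ≤
      (μ univ)⁻¹ * ∫⁻ y in s, ENNReal.ofReal (Φ |g y|) ∂μ := by
  set u := s.indicator fun y => |g y|
  have hu_nn (y : X) : 0 ≤ u y := indicator_nonneg (fun y _ => abs_nonneg (g y)) y
  have hΦu (y : X) :
      ENNReal.ofReal (Φ (u y)) = s.indicator (fun y => ENNReal.ofReal (Φ |g y|)) y := by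
    by_cases hy : y ∈ s <;> simp [u, hy, hΦ0]
  rw [← lintegral_indicator hs]
  simp_rw [← hΦu]
  by_cases hfin : ∫⁻ y, ENNReal.ofReal (Φ (u y)) ∂μ = ∞
  · simp [hfin, ENNReal.mul_top, measure_ne_top]
  have hu_int : Integrable u μ := hg.abs.indicator hs
  have hΦu_nn : 0 ≤ᵐ[μ] fun y => Φ (u y) :=
    ae_of_all _ fun y => hΦmono.nonneg_of_map_zero hΦ0 (hu_nn y)
  have hΦu_int : Integrable (fun y => Φ (u y)) μ :=
    ⟨hΦc.comp_aestronglyMeasurable hu_int.1,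
      (hasFiniteIntegral_iff_ofReal hΦu_nn).2 (lt_top_iff_ne_top.2 hfin)⟩
  have hmean : |∫ y in s, g y ∂μ| / μ.real univ ≤ ⨍ y, u y ∂μ := by
    rw [average_eq, smul_eq_mul, integral_indicator hs, ← div_eq_inv_mul]
    gcongr
    exact abs_integral_le_integral_abs
  have hjensen : Φ (⨍ y, u y ∂μ) ≤ ⨍ y, Φ (u y) ∂μ :=
    hΦconv.map_average_le hΦc.continuousOn isClosed_Ici (ae_of_all _ hu_nn) hu_int hΦu_int
  calc ENNReal.ofReal (Φ (|∫ y in s, g y ∂μ| / μ.real univ))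
      ≤ ENNReal.ofReal (⨍ y, Φ (u y) ∂μ) :=
        have hmean_nn : 0 ≤ |∫ y in s, g y ∂μ| / μ.real univ := by positivity
        ENNReal.ofReal_le_ofReal
          ((hΦmono hmean_nn (hmean_nn.trans hmean) hmean).trans hjensen)
    _ = (μ univ)⁻¹ * ∫⁻ y, ENNReal.ofReal (Φ (u y)) ∂μ := by
        rw [ofReal_average hΦu_int hΦu_nn, ENNReal.div_eq_inv_mul]


theorem lintegral_ofReal_map_sectionIntegral_le {μ : Measure X} [IsFiniteMeasure μ] [NeZero μ]
    {S : Set (X × X)} (hS : MeasurableSet S) {g : X → ℝ} (hg : Integrable g μ)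
    {Φ : ℝ → ℝ} (hΦc : Continuous Φ) (hΦmono : MonotoneOn Φ (Ici 0))
    (hΦconv : ConvexOn ℝ (Ici 0) Φ) (hΦ0 : Φ 0 = 0)
    {w₀ : X → ℝ} (hw₀ : ∀ y, μ.real {x | (x, y) ∈ S} ≤ w₀ y) {t : ℝ} (ht : 0 < t) :
    ∫⁻ x, ENNReal.ofReal (Φ (|∫ y in {y | (x, y) ∈ S}, g y ∂μ| / (μ.real univ * t))) ∂μ ≤
      (μ univ)⁻¹ * ∫⁻ y, ENNReal.ofReal (w₀ y * Φ (|g y| / t)) ∂μ := by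
  set ψ := fun y => ENNReal.ofReal (Φ (|g y| / t))
  have hψ : AEMeasurable ψ μ :=
    (hΦc.measurable.comp_aemeasurable (hg.1.aemeasurable.abs.div_const t)).ennreal_ofReal
  have hweight (y : X) :
      μ {x | (x, y) ∈ S} * ψ y ≤ ENNReal.ofReal (w₀ y * Φ (|g y| / t)) := by
    rw [ENNReal.ofReal_mul (measureReal_nonneg.trans (hw₀ y))]
    gcongr
    exact (ENNReal.le_ofReal_iff_toReal_le (measure_ne_top μ _)
      (measureReal_nonneg.trans (hw₀ y))).2 (hw₀ y)
  calc ∫⁻ x, ENNReal.ofReal (Φ (|∫ y in {y | (x, y) ∈ S}, g y ∂μ| / (μ.real univ * t))) ∂μ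
      ≤ ∫⁻ x, (μ univ)⁻¹ * ∫⁻ y in {y | (x, y) ∈ S}, ψ y ∂μ ∂μ :=
        lintegral_mono fun x => by
          simpa [ψ, abs_div, abs_of_pos ht, integral_div, div_div, mul_comm] using
            ofReal_map_abs_setIntegral_div_le hΦc hΦmono hΦconv hΦ0
              (s := {y | (x, y) ∈ S}) (measurable_prodMk_left hS) (hg.div_const t)
    _ = (μ univ)⁻¹ * ∫⁻ y, μ {x | (x, y) ∈ S} * ψ y ∂μ := by
        rw [lintegral_const_mul' _ _ (ENNReal.inv_ne_top.2 (NeZero.ne (μ univ))),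
          lintegral_setLIntegral_section_eq hS hψ]
    _ ≤ (μ univ)⁻¹ * ∫⁻ y, ENNReal.ofReal (w₀ y * Φ (|g y| / t)) ∂μ := by
        gcongr _ * ?_
        exact lintegral_mono hweight

end

theorem stmt_4_general {X : Type*} [MeasurableSpace X] (lam : Measure X)
    (hpos : 0 < lam Set.univ) (hfin : lam Set.univ < ⊤)
    (S : Set (X × X)) (hS : MeasurableSet S)
    (g : X → ℝ) (hgint : Integrable g lam)
    (f : X → ℝ) (hf : ∀ x, f x = ∫ y in {y | (x, y) ∈ S}, g y ∂lam)
    (Φ : ℝ → ℝ) (hΦc : Continuous Φ) (hΦmono : MonotoneOn Φ (Set.Ici 0))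
    (hΦconv : ConvexOn ℝ (Set.Ici 0) Φ) (hΦ0 : Φ 0 = 0)
    (w₀ : X → ℝ)
    (hw₀ : ∀ y, (lam {x | (x, y) ∈ S}).toReal ≤ w₀ y) :
    luxW lam Φ (fun _ => 1) f ≤
      lam Set.univ * luxW lam Φ (fun y => w₀ y / (lam Set.univ).toReal) g := by
  have : IsFiniteMeasure lam := ⟨hfin⟩
  have : NeZero lam := ⟨Measure.measure_univ_ne_zero.1 hpos.ne'⟩
  have hL : 0 < lam.real univ := ENNReal.toReal_pos hpos.ne' hfin.ne
  suffices luxW lam Φ (fun _ => 1) f ≤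
      ENNReal.ofReal (lam.real univ) * luxW lam Φ (fun y => w₀ y / lam.real univ) g by
    rwa [ofReal_measureReal] at this
  refine luxW_le_ofReal_mul_luxW hL fun t ht hg => ?_
  calc ∫⁻ x, ENNReal.ofReal (1 * Φ (|f x| / (lam.real univ * t))) ∂lam
      = ∫⁻ x, ENNReal.ofReal
          (Φ (|∫ y in {y | (x, y) ∈ S}, g y ∂lam| / (lam.real univ * t))) ∂lam := by
        simp only [one_mul, hf]
    _ ≤ (lam univ)⁻¹ * ∫⁻ y, ENNReal.ofReal (w₀ y * Φ (|g y| / t)) ∂lam :=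
        lintegral_ofReal_map_sectionIntegral_le hS hgint hΦc hΦmono hΦconv hΦ0 hw₀ ht
    _ = ∫⁻ y, ENNReal.ofReal (w₀ y / lam.real univ * Φ (|g y| / t)) ∂lam := by
        rw [← lintegral_const_mul' _ _ (ENNReal.inv_ne_top.2 hpos.ne')]
        refine lintegral_congr fun y => ?_
        rw [div_mul_eq_mul_div, ENNReal.ofReal_div_of_pos hL, ofReal_measureReal,
          ENNReal.div_eq_inv_mul]
    _ ≤ 1 := hg

theorem stmt_4 {X : Type*} [MeasurableSpace X] (lam : Measure X)
    (hpos : 0 < lam Set.univ) (hfin : lam Set.univ < ⊤)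
    (S : Set (X × X)) (hS : MeasurableSet S)
    (g : X → ℝ) (hgmeas : Measurable g) (hgint : Integrable g lam)
    (f : X → ℝ) (hf : ∀ x, f x = ∫ y in {y | (x, y) ∈ S}, g y ∂lam)
    (Φ : ℝ → ℝ) (hΦc : Continuous Φ) (hΦmono : MonotoneOn Φ (Set.Ici 0))
    (hΦconv : ConvexOn ℝ (Set.Ici 0) Φ) (hΦ0 : Φ 0 = 0)
    (w₀ : X → ℝ) (hw₀meas : Measurable w₀)
    (hw₀ : ∀ y, (lam {x | (x, y) ∈ S}).toReal ≤ w₀ y) :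
    luxW lam Φ (fun _ => 1) f ≤
      lam Set.univ * luxW lam Φ (fun y => w₀ y / (lam Set.univ).toReal) g :=
  stmt_4_general lam hpos hfin S hS g hgint f hf Φ hΦc hΦmono hΦconv hΦ0 w₀ hw₀
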